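/- Unital commutative semisimple fMV-algebras have the amalgamation property: if Z, A, B are unital commutative semisimple fMV-algebras and z_A : Z → A, z_B : Z → B are injective fMV-algebra homomorphisms, then there exist a unital commutative semisimple fMV-algebra E and injective fMV-algebra homomorphisms f_A : A → E and f_B : B → E with f_A ∘ z_A = f_B ∘ z_B. -/

import Mathlib

universe u v w

/-- An MV-algebra structure on the type `A`. -/
structure MVAlg (A : Type u) where
  oplus : A → A → A
  star : A → A
  zero : A
  oplus_comm : ∀ x y, oplus x y = oplus y x
  oplus_assoc : ∀ x y z, oplus (oplus x y) z = oplus x (oplus y z)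
  oplus_zero : ∀ x, oplus x zero = x
  star_star : ∀ x, star (star x) = x
  oplus_one : ∀ x, oplus x (star zero) = star zero
  luk : ∀ x y, oplus (star (oplus (star x) y)) y = oplus (star (oplus (star y) x)) x

namespace MVAlg

variable {A : Type u}

/-- The top element `1 := 0*`. -/
def one (M : MVAlg A) : A := M.star M.zero

/-- The underlying order: `x ≤ y` iff `x* ⊕ y = 1`. -/
def le (M : MVAlg A) (x y : A) : Prop := M.oplus (M.star x) y = M.one

/-- An ideal: contains `0`, closed under `⊕` and downward closed. -/
def IsIdeal (M : MVAlg A) (I : Set A) : Prop :=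
  M.zero ∈ I ∧ (∀ x ∈ I, ∀ y ∈ I, M.oplus x y ∈ I) ∧ (∀ x y, M.le x y → y ∈ I → x ∈ I)

/-- A maximal proper ideal. -/
def IsMaximalIdeal (M : MVAlg A) (I : Set A) : Prop :=
  M.IsIdeal I ∧ I ≠ Set.univ ∧ ∀ J, M.IsIdeal J → J ≠ Set.univ → I ⊆ J → J = I

/-- Semisimplicity: the intersection of all maximal proper ideals is `{0}`. -/
def Semisimple (M : MVAlg A) : Prop :=
  {x | ∀ I, M.IsMaximalIdeal I → x ∈ I} = {M.zero}

end MVAlg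

/-- Homomorphisms of MV-algebras preserve `⊕`, `*` and `0`. -/
def MVHom {A : Type u} {B : Type v} (M : MVAlg A) (N : MVAlg B) (f : A → B) : Prop :=
  (∀ x y, f (M.oplus x y) = N.oplus (f x) (f y)) ∧
  (∀ x, f (M.star x) = N.star (f x)) ∧ f M.zero = N.zero

/-- A unital commutative PMV-algebra. -/
structure PMVAlg (A : Type u) extends MVAlg A where
  mul : A → A → A
  mul_assoc : ∀ x y z, mul (mul x y) z = mul x (mul y z)
  mul_comm : ∀ x y, mul x y = mul y x
  mul_one : ∀ x, mul x toMVAlg.one = x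
  mul_linear_right : ∀ x y z, toMVAlg.le y (toMVAlg.star z) →
    mul x (toMVAlg.oplus y z) = toMVAlg.oplus (mul x y) (mul x z)
  mul_linear_left : ∀ x y z, toMVAlg.le x (toMVAlg.star y) →
    mul (toMVAlg.oplus x y) z = toMVAlg.oplus (mul x z) (mul y z)

/-- Semisimplicity of a PMV-algebra is semisimplicity of its MV-reduct. -/
def PMVAlg.Semisimple {A : Type u} (P : PMVAlg A) : Prop := P.toMVAlg.Semisimple

/-- Homomorphisms of PMV-algebras. -/
def PMVHom {A : Type u} {B : Type v} (P : PMVAlg A) (Q : PMVAlg B) (f : A → B) : Prop :=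
  MVHom P.toMVAlg Q.toMVAlg f ∧ ∀ x y, f (P.mul x y) = Q.mul (f x) (f y)

/-- A Riesz MV-algebra: an MV-algebra with a scalar multiplication by elements of `[0,1]`. -/
structure RieszMVAlg (A : Type u) extends MVAlg A where
  smul : ℝ → A → A
  smul_oplus : ∀ α : ℝ, α ∈ Set.Icc (0:ℝ) 1 → ∀ x y, toMVAlg.le x (toMVAlg.star y) →
    smul α (toMVAlg.oplus x y) = toMVAlg.oplus (smul α x) (smul α y)
  add_smul : ∀ α β : ℝ, α ∈ Set.Icc (0:ℝ) 1 → β ∈ Set.Icc (0:ℝ) 1 → α + β ≤ 1 → ∀ x,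
    smul (α + β) x = toMVAlg.oplus (smul α x) (smul β x) ∧
    toMVAlg.le (smul α x) (toMVAlg.star (smul β x))
  mul_smul : ∀ α β : ℝ, α ∈ Set.Icc (0:ℝ) 1 → β ∈ Set.Icc (0:ℝ) 1 → ∀ x,
    smul (α * β) x = smul α (smul β x)
  one_smul : ∀ x, smul 1 x = x

/-- Semisimplicity of a Riesz MV-algebra. -/
def RieszMVAlg.Semisimple {A : Type u} (R : RieszMVAlg A) : Prop := R.toMVAlg.Semisimple

/-- Homomorphisms of Riesz MV-algebras. -/
def RieszMVHom {A : Type u} {B : Type v} (R : RieszMVAlg A) (S : RieszMVAlg B) (f : A → B) : Prop :=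
  MVHom R.toMVAlg S.toMVAlg f ∧
  ∀ α : ℝ, α ∈ Set.Icc (0:ℝ) 1 → ∀ x, f (R.smul α x) = S.smul α (f x)

/-- A unital commutative fMV-algebra. -/
structure FMVAlg (A : Type u) extends PMVAlg A, RieszMVAlg A where
  smul_mul_left : ∀ α : ℝ, α ∈ Set.Icc (0:ℝ) 1 → ∀ x y,
    smul α (mul x y) = mul (smul α x) y
  smul_mul_right : ∀ α : ℝ, α ∈ Set.Icc (0:ℝ) 1 → ∀ x y,
    smul α (mul x y) = mul x (smul α y)

/-- Semisimplicity of an fMV-algebra. -/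
def FMVAlg.Semisimple {A : Type u} (F : FMVAlg A) : Prop := F.toMVAlg.Semisimple

/-- Homomorphisms of fMV-algebras preserve `⊕`, `*`, `0`, `·` and scalar multiplication. -/
def FMVHom {A : Type u} {B : Type v} (F : FMVAlg A) (G : FMVAlg B) (f : A → B) : Prop :=
  MVHom F.toMVAlg G.toMVAlg f ∧
  (∀ x y, f (F.mul x y) = G.mul (f x) (f y)) ∧
  (∀ α : ℝ, α ∈ Set.Icc (0:ℝ) 1 → ∀ x, f (F.smul α x) = G.smul α (f x))

/-!
For a maximal ideal `M` of an fMV-algebra, the scalar multiplication forces the quotient by `M`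
to be linearly ordered and Archimedean over the scalars `α·1`, so sending `x` to the supremum of
the scalars lying below it modulo `M` is a homomorphism into `[0,1]` with kernel `M`
(Hölder). Consequently `[0,1]`-valued homomorphisms separate the points of a semisimple
algebra, and such a homomorphism is determined by its kernel. A homomorphism `g : Z → [0,1]`
then extends along an embedding `Z → B`: take a maximal ideal of `B` containing the ideal
generated by the image of `ker g`. The amalgam is `[0,1]^S`, where `S` is the set of pairs of
`[0,1]`-valued homomorphisms on `A` and `B` that agree on `Z`; the extension property makes both
maps into it injective.
-/

namespace MVAlg

variable {A : Type u} (M : MVAlg A)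

instance : Std.Associative M.oplus := ⟨M.oplus_assoc⟩
instance : Std.Commutative M.oplus := ⟨M.oplus_comm⟩

/-- Truncated subtraction `x ⊖ y`. -/
def sub (x y : A) : A := M.star (M.oplus (M.star x) y)

/-- The lattice join `x ∨ y`. -/
def sup (x y : A) : A := M.oplus (M.sub x y) y

def nfold (M : MVAlg A) (x : A) : ℕ → A
  | 0 => M.zero
  | n + 1 => M.oplus x (M.nfold x n)

theorem oplus_one' (x : A) : M.oplus x M.one = M.one := M.oplus_one x

theorem one_oplus (x : A) : M.oplus M.one x = M.one := by rw [M.oplus_comm]; exact M.oplus_one x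

theorem zero_oplus (x : A) : M.oplus M.zero x = x := by rw [M.oplus_comm]; exact M.oplus_zero x

theorem star_one : M.star M.one = M.zero := by rw [one, M.star_star]

theorem star_oplus_self (x : A) : M.oplus (M.star x) x = M.one := by
  have h := M.luk M.one x
  rwa [M.star_one, M.zero_oplus, M.oplus_one'] at h

theorem oplus_star_self (x : A) : M.oplus x (M.star x) = M.one := by
  rw [M.oplus_comm]; exact M.star_oplus_self x

theorem le_refl (x : A) : M.le x x := M.star_oplus_self x

theorem le_one (x : A) : M.le x M.one := M.oplus_one' _

theorem zero_le (x : A) : M.le M.zero x := M.one_oplus x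

theorem sup_comm (x y : A) : M.sup x y = M.sup y x := M.luk x y

theorem sub_eq_zero_of_le {x y : A} (h : M.le x y) : M.sub x y = M.zero := by
  rw [sub, h, star_one]

theorem le_of_sub_eq_zero {x y : A} (h : M.sub x y = M.zero) : M.le x y := by
  have := congrArg M.star h
  rwa [sub, M.star_star] at this

theorem sup_of_le {x y : A} (h : M.le x y) : M.sup x y = y := by
  rw [sup, M.sub_eq_zero_of_le h, M.zero_oplus]

theorem le_oplus_right (x c : A) : M.le x (M.oplus x c) := by
  show M.oplus (M.star x) (M.oplus x c) = M.one
  rw [← M.oplus_assoc, M.star_oplus_self, M.one_oplus]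

theorem le_oplus_left (x c : A) : M.le x (M.oplus c x) := by
  rw [M.oplus_comm]; exact M.le_oplus_right x c

theorem oplus_sub_of_le {x y : A} (h : M.le x y) : M.oplus x (M.sub y x) = y := by
  rw [M.oplus_comm, ← sup, M.sup_comm, M.sup_of_le h]

theorem le_iff_exists_oplus {x y : A} : M.le x y ↔ ∃ c, y = M.oplus x c :=
  ⟨fun h => ⟨M.sub y x, (M.oplus_sub_of_le h).symm⟩, fun ⟨c, hc⟩ => hc ▸ M.le_oplus_right x c⟩

theorem le_trans {x y z : A} (h1 : M.le x y) (h2 : M.le y z) : M.le x z := by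
  obtain ⟨c, rfl⟩ := M.le_iff_exists_oplus.mp h1
  obtain ⟨d, rfl⟩ := M.le_iff_exists_oplus.mp h2
  exact M.le_iff_exists_oplus.mpr ⟨M.oplus c d, M.oplus_assoc _ _ _⟩

theorem le_antisymm {x y : A} (h1 : M.le x y) (h2 : M.le y x) : x = y := by
  rw [← M.sup_of_le h1, M.sup_comm, M.sup_of_le h2]

theorem oplus_le_oplus_left {x y : A} (h : M.le x y) (z : A) :
    M.le (M.oplus x z) (M.oplus y z) := by
  obtain ⟨c, rfl⟩ := M.le_iff_exists_oplus.mp h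
  exact M.le_iff_exists_oplus.mpr ⟨c, by ac_rfl⟩

theorem oplus_le_oplus_right {x y : A} (h : M.le x y) (z : A) :
    M.le (M.oplus z x) (M.oplus z y) := by
  rw [M.oplus_comm z x, M.oplus_comm z y]; exact M.oplus_le_oplus_left h z

theorem oplus_le_oplus {x y x' y' : A} (h : M.le x x') (h' : M.le y y') :
    M.le (M.oplus x y) (M.oplus x' y') :=
  M.le_trans (M.oplus_le_oplus_left h y) (M.oplus_le_oplus_right h' x')

theorem star_le_star {x y : A} (h : M.le x y) : M.le (M.star y) (M.star x) := by
  show M.oplus (M.star (M.star y)) (M.star x) = M.one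
  rw [M.star_star, M.oplus_comm]; exact h

theorem eq_one_of_one_le {x : A} (h : M.le M.one x) : x = M.one := M.le_antisymm (M.le_one x) h

theorem star_sub (x y : A) : M.star (M.sub x y) = M.oplus (M.star x) y := by
  rw [sub, M.star_star]

theorem sub_le_star (x y : A) : M.le (M.sub x y) (M.star y) := by
  show M.oplus (M.star (M.sub x y)) (M.star y) = M.one
  rw [M.star_sub, M.oplus_assoc, M.oplus_star_self, M.oplus_one']

theorem le_star_sub (x y : A) : M.le y (M.star (M.sub x y)) := by
  simpa only [M.star_star] using M.star_le_star (M.sub_le_star x y)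

theorem le_oplus_sub (x y : A) : M.le x (M.oplus y (M.sub x y)) := by
  show M.oplus (M.star x) (M.oplus y (M.sub x y)) = M.one
  rw [← M.oplus_assoc]
  exact M.oplus_star_self _

theorem oplus_sub_le (x y : A) : M.le (M.sub (M.oplus x y) x) y := by
  show M.oplus (M.star (M.sub (M.oplus x y) x)) y = M.one
  rw [M.star_sub, M.oplus_assoc]
  exact M.star_oplus_self _

theorem sub_le_left (x y : A) : M.le (M.sub x y) x := by
  show M.oplus (M.star (M.sub x y)) x = M.one
  rw [M.star_sub, M.oplus_assoc, M.oplus_comm y, ← M.oplus_assoc, M.star_oplus_self, M.one_oplus]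

theorem sub_mono_left {x x' : A} (h : M.le x x') (y : A) : M.le (M.sub x y) (M.sub x' y) :=
  M.star_le_star (M.oplus_le_oplus_left (M.star_le_star h) y)

theorem sub_anti_right {y y' : A} (h : M.le y y') (x : A) : M.le (M.sub x y') (M.sub x y) :=
  M.star_le_star (M.oplus_le_oplus_right h _)

theorem sub_le_of_le_oplus {u v w : A} (h : M.le u (M.oplus v w)) : M.le (M.sub u v) w :=
  M.le_trans (M.sub_mono_left h v) (M.oplus_sub_le v w)

theorem sub_self (x : A) : M.sub x x = M.zero := M.sub_eq_zero_of_le (M.le_refl x)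

theorem sub_zero (x : A) : M.sub x M.zero = x := by
  rw [sub, M.oplus_zero, M.star_star]

theorem sub_one (x : A) : M.sub x M.one = M.zero := M.sub_eq_zero_of_le (M.le_one x)

theorem sub_sub (a b c : A) : M.sub (M.sub a b) c = M.sub a (M.oplus b c) := by
  rw [sub, M.star_sub, M.oplus_assoc, sub]

theorem sub_star_comm (a b : A) : M.sub a (M.star b) = M.sub b (M.star a) := by
  rw [sub, M.oplus_comm, sub]

theorem le_sup_left (x y : A) : M.le x (M.sup x y) := by
  rw [M.sup_comm]; exact M.le_oplus_left x _

theorem le_sup_right (x y : A) : M.le y (M.sup x y) := M.le_oplus_left y _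

theorem sup_le {x y z : A} (h1 : M.le x z) (h2 : M.le y z) : M.le (M.sup x y) z := by
  have h3 : M.le (M.sup x y) (M.sup z y) := M.oplus_le_oplus_left (M.sub_mono_left h1 y) y
  rwa [M.sup_comm z y, M.sup_of_le h2] at h3

theorem oplus_sub_cancel_left {a b : A} (h : M.le b (M.star a)) :
    M.sub (M.oplus a b) a = b := by
  have ha : M.le a (M.star b) := by simpa only [M.star_star] using M.star_le_star h
  have key : M.oplus (M.star (M.oplus a b)) a = M.star b := by
    rw [show M.star (M.oplus a b) = M.sub (M.star b) a by
      rw [sub, M.star_star, M.oplus_comm a b], ← sup, M.sup_comm, M.sup_of_le ha]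
  rw [sub, key, M.star_star]

theorem sup_sub (u v : A) : M.sub (M.sup u v) v = M.sub u v := by
  rw [sup, M.oplus_comm, M.oplus_sub_cancel_left (M.sub_le_star u v)]

theorem sub_sub_cancel {x s : A} (h : M.le x s) : M.sub s (M.sub s x) = x := by
  have hs : M.oplus (M.sub s x) x = s := by rw [M.oplus_comm, M.oplus_sub_of_le h]
  calc M.sub s (M.sub s x) = M.sub (M.oplus (M.sub s x) x) (M.sub s x) := by rw [hs]
    _ = x := M.oplus_sub_cancel_left (M.le_star_sub s x)

theorem sub_le_sub_oplus_sub (a b c : A) :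
    M.le (M.sub a c) (M.oplus (M.sub a b) (M.sub b c)) := by
  apply M.sub_le_of_le_oplus
  refine M.le_trans (M.le_oplus_sub a b) ?_
  have := M.oplus_le_oplus_left (M.le_oplus_sub b c) (M.sub a b)
  rwa [M.oplus_assoc, M.oplus_comm (M.sub b c)] at this

theorem oplus_sub_oplus_le (a b c d : A) :
    M.le (M.sub (M.oplus a b) (M.oplus c d)) (M.oplus (M.sub a c) (M.sub b d)) := by
  apply M.sub_le_of_le_oplus
  have h := M.oplus_le_oplus (M.le_oplus_sub a c) (M.le_oplus_sub b d)
  rwa [show M.oplus (M.oplus c (M.sub a c)) (M.oplus d (M.sub b d))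
      = M.oplus (M.oplus c d) (M.oplus (M.sub a c) (M.sub b d)) by ac_rfl] at h

theorem sub_sub_sub_right_le (u v w : A) : M.le (M.sub (M.sub u w) (M.sub v w)) (M.sub u v) := by
  apply M.sub_le_of_le_oplus
  refine M.le_trans (M.sub_mono_left (M.le_oplus_sub u v) w) (M.sub_le_of_le_oplus ?_)
  rw [← M.oplus_assoc]
  exact M.oplus_le_oplus_left (M.le_oplus_sub v w) _

theorem sub_sub_sub_left_le (u v w : A) : M.le (M.sub (M.sub w v) (M.sub w u)) (M.sub u v) :=
  M.sub_le_of_le_oplus (M.sub_le_sub_oplus_sub w u v)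

theorem sup_sub_le (x y z : A) :
    M.le (M.sub (M.sup x y) z) (M.oplus (M.sub x z) (M.sub y z)) := by
  apply M.sub_le_of_le_oplus
  apply M.sup_le
  · exact M.le_trans (M.le_oplus_sub x z) (M.oplus_le_oplus_right (M.le_oplus_right _ _) z)
  · exact M.le_trans (M.le_oplus_sub y z) (M.oplus_le_oplus_right (M.le_oplus_left _ _) z)

theorem eq_of_sub_eq_zero {x y : A} (h1 : M.sub x y = M.zero) (h2 : M.sub y x = M.zero) :
    x = y := M.le_antisymm (M.le_of_sub_eq_zero h1) (M.le_of_sub_eq_zero h2)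

theorem eq_zero_of_oplus_self {a : A} (h1 : M.oplus a a = a) (h2 : M.le a (M.star a)) :
    a = M.zero := by
  have := M.oplus_sub_cancel_left h2
  rwa [h1, M.sub_self, eq_comm] at this

theorem nfold_add (x : A) (m n : ℕ) :
    M.nfold x (m + n) = M.oplus (M.nfold x m) (M.nfold x n) := by
  induction m with
  | zero => rw [Nat.zero_add, nfold, M.zero_oplus]
  | succ k ih => rw [Nat.add_right_comm, nfold, ih, nfold, M.oplus_assoc]

variable {I : Set A}

theorem mem_of_le (hI : M.IsIdeal I) {x y : A} (h : M.le x y) (hy : y ∈ I) : x ∈ I :=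
  hI.2.2 x y h hy

theorem oplus_mem (hI : M.IsIdeal I) {x y : A} (hx : x ∈ I) (hy : y ∈ I) :
    M.oplus x y ∈ I := hI.2.1 x hx y hy

theorem one_notMem (hI : M.IsIdeal I) (h : I ≠ Set.univ) : M.one ∉ I :=
  fun h1 => h (Set.eq_univ_of_forall fun x => M.mem_of_le hI (M.le_one x) h1)

theorem nfold_mem (hI : M.IsIdeal I) {x : A} (hx : x ∈ I) (k : ℕ) : M.nfold x k ∈ I := by
  induction k with
  | zero => exact hI.1
  | succ k ih => exact M.oplus_mem hI hx ih

def LeMod (I : Set A) (x y : A) : Prop := M.sub x y ∈ I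

theorem leMod_of_le (hI : M.IsIdeal I) {x y : A} (h : M.le x y) : M.LeMod I x y := by
  rw [LeMod, M.sub_eq_zero_of_le h]; exact hI.1

theorem leMod_refl (hI : M.IsIdeal I) (x : A) : M.LeMod I x x := M.leMod_of_le hI (M.le_refl x)

theorem leMod_trans (hI : M.IsIdeal I) {x y z : A} (h1 : M.LeMod I x y) (h2 : M.LeMod I y z) :
    M.LeMod I x z :=
  M.mem_of_le hI (M.sub_le_sub_oplus_sub x y z) (M.oplus_mem hI h1 h2)

theorem leMod_of_leMod_of_le (hI : M.IsIdeal I) {x y z : A} (h1 : M.LeMod I x y)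
    (h2 : M.le y z) : M.LeMod I x z := M.mem_of_le hI (M.sub_anti_right h2 x) h1

theorem leMod_of_le_of_leMod (hI : M.IsIdeal I) {x y z : A} (h1 : M.le x y)
    (h2 : M.LeMod I y z) : M.LeMod I x z := M.mem_of_le hI (M.sub_mono_left h1 z) h2

theorem leMod_oplus (hI : M.IsIdeal I) {a b c d : A} (h1 : M.LeMod I a c)
    (h2 : M.LeMod I b d) : M.LeMod I (M.oplus a b) (M.oplus c d) :=
  M.mem_of_le hI (M.oplus_sub_oplus_le a b c d) (M.oplus_mem hI h1 h2)

theorem leMod_sub_left (hI : M.IsIdeal I) {u v : A} (h : M.LeMod I u v) (w : A) :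
    M.LeMod I (M.sub u w) (M.sub v w) := M.mem_of_le hI (M.sub_sub_sub_right_le u v w) h

theorem leMod_sub_right (hI : M.IsIdeal I) {u v : A} (h : M.LeMod I u v) (w : A) :
    M.LeMod I (M.sub w v) (M.sub w u) := M.mem_of_le hI (M.sub_sub_sub_left_le u v w) h

theorem leMod_sup (hI : M.IsIdeal I) {x y z : A} (h1 : M.LeMod I x z) (h2 : M.LeMod I y z) :
    M.LeMod I (M.sup x y) z :=
  M.mem_of_le hI (M.sup_sub_le x y z) (M.oplus_mem hI h1 h2)

theorem leMod_sub_of_leMod_sub (hI : M.IsIdeal I) {x s r : A} (hxs : M.le x s)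
    (h : M.LeMod I r (M.sub s x)) : M.LeMod I x (M.sub s r) := by
  have h1 : M.LeMod I (M.sup r (M.sub s x)) (M.sub s x) := by
    rw [LeMod, M.sup_sub]; exact h
  have h2 := M.leMod_sub_right hI h1 s
  rw [M.sub_sub_cancel hxs] at h2
  exact M.leMod_of_leMod_of_le hI h2 (M.sub_anti_right (M.le_sup_left r _) s)

theorem leMod_sub_nfold (hI : M.IsIdeal I) {s c : A} (h : M.LeMod I s (M.sub s c)) (k : ℕ) :
    M.LeMod I s (M.sub s (M.nfold c k)) := by
  induction k with
  | zero => rw [nfold, M.sub_zero]; exact M.leMod_refl hI s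
  | succ k ih =>
      have step := M.leMod_sub_left hI h (M.nfold c k)
      rw [M.sub_sub] at step
      exact M.leMod_trans hI ih step

theorem exists_star_nfold_mem_of_notMem {J : Set A} (hJ : M.IsMaximalIdeal J) {x : A}
    (hx : x ∉ J) : ∃ n, M.star (M.nfold x n) ∈ J := by
  set G : Set A := {t | ∃ m ∈ J, ∃ n, M.le t (M.oplus m (M.nfold x n))}
  have hG : M.IsIdeal G := by
    refine ⟨⟨M.zero, hJ.1.1, 0, M.zero_le _⟩, ?_, ?_⟩
    · rintro a ⟨m, hm, n, hn⟩ b ⟨m', hm', n', hn'⟩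
      refine ⟨M.oplus m m', M.oplus_mem hJ.1 hm hm', n + n', ?_⟩
      have h := M.oplus_le_oplus hn hn'
      rwa [show M.oplus (M.oplus m (M.nfold x n)) (M.oplus m' (M.nfold x n'))
        = M.oplus (M.oplus m m') (M.oplus (M.nfold x n) (M.nfold x n')) by ac_rfl,
        ← M.nfold_add] at h
    · rintro a b hab ⟨m, hm, n, hn⟩
      exact ⟨m, hm, n, M.le_trans hab hn⟩
  have hJG : J ⊆ G := fun m hm => ⟨m, hm, 0, M.le_oplus_right m _⟩
  have hxG : x ∈ G := ⟨M.zero, hJ.1.1, 1, by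
    rw [nfold, nfold, M.oplus_zero, M.zero_oplus]; exact M.le_refl x⟩
  have hGU : G = Set.univ := by
    by_contra hne
    exact hx (hJ.2.2 G hG hne hJG ▸ hxG)
  obtain ⟨m, hm, n, hle⟩ : M.one ∈ G := hGU ▸ Set.mem_univ _
  refine ⟨n, M.mem_of_le hJ.1 ?_ hm⟩
  have h := M.sub_le_of_le_oplus (by rwa [M.oplus_comm] at hle)
  rwa [sub, M.star_one, M.zero_oplus] at h

theorem exists_isMaximalIdeal_superset {I0 : Set A} (hI0 : M.IsIdeal I0) (hone : M.one ∉ I0) :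
    ∃ J, M.IsMaximalIdeal J ∧ I0 ⊆ J := by
  set S : Set (Set A) := {J | M.IsIdeal J ∧ M.one ∉ J}
  have hchain : ∀ c ⊆ S, IsChain (· ⊆ ·) c → c.Nonempty → ∃ ub ∈ S, ∀ s ∈ c, s ⊆ ub := by
    intro c hcS hc ⟨J0, hJ0⟩
    refine ⟨⋃₀ c, ⟨⟨⟨J0, hJ0, (hcS hJ0).1.1⟩, ?_, ?_⟩, ?_⟩, fun s hs => Set.subset_sUnion_of_mem hs⟩
    · rintro x ⟨J1, hJ1, hx⟩ y ⟨J2, hJ2, hy⟩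
      rcases hc.total hJ1 hJ2 with h | h
      · exact ⟨J2, hJ2, M.oplus_mem (hcS hJ2).1 (h hx) hy⟩
      · exact ⟨J1, hJ1, M.oplus_mem (hcS hJ1).1 hx (h hy)⟩
    · rintro x y hxy ⟨J1, hJ1, hy⟩
      exact ⟨J1, hJ1, M.mem_of_le (hcS hJ1).1 hxy hy⟩
    · rintro ⟨J1, hJ1, hx⟩
      exact (hcS hJ1).2 hx
  obtain ⟨J, hI0J, hJ⟩ := zorn_subset_nonempty S hchain I0 ⟨hI0, hone⟩
  refine ⟨J, ⟨hJ.1.1, fun h => hJ.1.2 (h ▸ Set.mem_univ _), ?_⟩, hI0J⟩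
  intro K hK hKne hJK
  exact Set.Subset.antisymm (hJ.2 ⟨hK, M.one_notMem hK hKne⟩ hJK) hJK

end MVAlg

namespace MVHom

variable {A : Type u} {B : Type v} {M : MVAlg A} {N : MVAlg B} {f : A → B}

theorem map_one (hf : MVHom M N f) : f M.one = N.one := by
  rw [MVAlg.one, hf.2.1, hf.2.2, MVAlg.one]

theorem map_sub (hf : MVHom M N f) (x y : A) : f (M.sub x y) = N.sub (f x) (f y) := by
  rw [MVAlg.sub, hf.2.1, hf.1, hf.2.1, MVAlg.sub]

theorem map_le (hf : MVHom M N f) {x y : A} (h : M.le x y) : N.le (f x) (f y) := by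
  rw [MVAlg.le, ← hf.2.1, ← hf.1, h, hf.map_one]

theorem map_nfold (hf : MVHom M N f) (x : A) (n : ℕ) : f (M.nfold x n) = N.nfold (f x) n := by
  induction n with
  | zero => exact hf.2.2
  | succ n ih => rw [MVAlg.nfold, hf.1, ih, MVAlg.nfold]

end MVHom

theorem FMVHom.comp {A : Type u} {B : Type v} {C : Type w} {F : FMVAlg A} {G : FMVAlg B}
    {H : FMVAlg C} {f : A → B} {g : B → C} (hf : FMVHom F G f) (hg : FMVHom G H g) :
    FMVHom F H (g ∘ f) := by
  obtain ⟨⟨f1, f2, f3⟩, f4, f5⟩ := hf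
  obtain ⟨⟨g1, g2, g3⟩, g4, g5⟩ := hg
  refine ⟨⟨fun x y => ?_, fun x => ?_, ?_⟩, fun x y => ?_, fun α hα x => ?_⟩ <;>
    simp only [Function.comp_apply, *]

namespace FMVAlg

variable {A : Type u} (F : FMVAlg A)

abbrev mv : MVAlg A := F.toPMVAlg.toMVAlg

theorem zero_smul (x : A) : F.smul 0 x = F.mv.zero := by
  obtain ⟨heq, hle⟩ := F.add_smul 0 0 (by norm_num) (by norm_num) (by norm_num) x
  rw [add_zero] at heq
  exact F.mv.eq_zero_of_oplus_self heq.symm hle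

theorem smul_zero {α : ℝ} (hα : α ∈ Set.Icc (0:ℝ) 1) : F.smul α F.mv.zero = F.mv.zero := by
  rw [← F.zero_smul F.mv.zero, ← F.mul_smul α 0 hα (by norm_num), mul_zero]

theorem smul_le_smul_left {α β : ℝ} (hα : α ∈ Set.Icc (0:ℝ) 1) (hβ : β ∈ Set.Icc (0:ℝ) 1)
    (h : α ≤ β) (x : A) : F.mv.le (F.smul α x) (F.smul β x) := by
  obtain ⟨heq, -⟩ := F.add_smul α (β - α) hα ⟨by linarith, by linarith [hβ.2, hα.1]⟩
    (by linarith [hβ.2]) x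
  rw [add_sub_cancel] at heq
  rw [heq]
  exact F.mv.le_oplus_right _ _

theorem smul_le_self {α : ℝ} (hα : α ∈ Set.Icc (0:ℝ) 1) (x : A) : F.mv.le (F.smul α x) x := by
  simpa only [F.one_smul] using F.smul_le_smul_left hα ⟨zero_le_one, le_rfl⟩ hα.2 x

theorem smul_eq_oplus_smul_sub {α : ℝ} (hα : α ∈ Set.Icc (0:ℝ) 1) {x y : A} (h : F.mv.le x y) :
    F.smul α y = F.mv.oplus (F.smul α x) (F.smul α (F.mv.sub y x)) := by
  rw [← F.smul_oplus α hα x _ (F.mv.le_star_sub y x), F.mv.oplus_sub_of_le h]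

theorem smul_mono {α : ℝ} (hα : α ∈ Set.Icc (0:ℝ) 1) {x y : A} (h : F.mv.le x y) :
    F.mv.le (F.smul α x) (F.smul α y) := by
  rw [F.smul_eq_oplus_smul_sub hα h]
  exact F.mv.le_oplus_right _ _

theorem smul_oplus_le {α : ℝ} (hα : α ∈ Set.Icc (0:ℝ) 1) (x y : A) :
    F.mv.le (F.smul α (F.mv.oplus x y)) (F.mv.oplus (F.smul α x) (F.smul α y)) := by
  rw [F.smul_eq_oplus_smul_sub hα (F.mv.le_oplus_right x y)]
  exact F.mv.oplus_le_oplus_right (F.smul_mono hα (F.mv.oplus_sub_le x y)) _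

theorem sub_smul_smul_le {α : ℝ} (hα : α ∈ Set.Icc (0:ℝ) 1) (x y : A) :
    F.mv.le (F.mv.sub (F.smul α x) (F.smul α y)) (F.mv.sub x y) := by
  apply F.mv.sub_le_of_le_oplus
  refine F.mv.le_trans (F.smul_mono hα (F.mv.le_oplus_sub x y)) ?_
  exact F.mv.le_trans (F.smul_oplus_le hα y _)
    (F.mv.oplus_le_oplus_right (F.smul_le_self hα _) _)

theorem smul_nfold_le {α : ℝ} (hα : α ∈ Set.Icc (0:ℝ) 1) (x : A) (k : ℕ) :
    F.mv.le (F.smul α (F.mv.nfold x k)) (F.mv.nfold (F.smul α x) k) := by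
  induction k with
  | zero => rw [MVAlg.nfold, MVAlg.nfold, F.smul_zero hα]; exact F.mv.le_refl _
  | succ k ih =>
      exact F.mv.le_trans (F.smul_oplus_le hα x _) (F.mv.oplus_le_oplus_right ih _)

theorem nfold_smul {α : ℝ} (hα : α ∈ Set.Icc (0:ℝ) 1) (x : A) (k : ℕ) (hk : k * α ≤ 1) :
    F.mv.nfold (F.smul α x) k = F.smul (k * α) x := by
  induction k with
  | zero => rw [MVAlg.nfold, Nat.cast_zero, zero_mul, F.zero_smul]
  | succ k ih =>
      have hkα : (k : ℝ) * α ≤ 1 := by push_cast at hk; linarith [hα.1]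
      rw [MVAlg.nfold, ih hkα, ← (F.add_smul α (k * α) hα ⟨mul_nonneg k.cast_nonneg hα.1, hkα⟩
        (by push_cast at hk; linarith) x).1]
      push_cast; ring_nf

theorem smul_inv_nfold_le (x : A) {n : ℕ} (hn : n ≠ 0) :
    F.mv.le (F.smul (n : ℝ)⁻¹ (F.mv.nfold x n)) x := by
  have hn' : (1 : ℝ) ≤ n := by exact_mod_cast Nat.one_le_iff_ne_zero.mpr hn
  have hinv : (n : ℝ)⁻¹ ∈ Set.Icc (0:ℝ) 1 := ⟨by positivity, inv_le_one_of_one_le₀ hn'⟩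
  have hcancel : (n : ℝ) * (n : ℝ)⁻¹ = 1 := mul_inv_cancel₀ (by positivity)
  refine F.mv.le_trans (F.smul_nfold_le hinv x n) ?_
  rw [F.nfold_smul hinv x n hcancel.le, hcancel, F.one_smul]
  exact F.mv.le_refl x

def scalar (α : ℝ) : A := F.smul α F.mv.one

theorem scalar_zero : F.scalar 0 = F.mv.zero := F.zero_smul _

theorem scalar_one : F.scalar 1 = F.mv.one := F.one_smul _

theorem scalar_mono {α β : ℝ} (hα : α ∈ Set.Icc (0:ℝ) 1) (hβ : β ∈ Set.Icc (0:ℝ) 1)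
    (h : α ≤ β) : F.mv.le (F.scalar α) (F.scalar β) := F.smul_le_smul_left hα hβ h _

theorem scalar_add {α β : ℝ} (hα : α ∈ Set.Icc (0:ℝ) 1) (hβ : β ∈ Set.Icc (0:ℝ) 1)
    (h : α + β ≤ 1) : F.scalar (α + β) = F.mv.oplus (F.scalar α) (F.scalar β) :=
  (F.add_smul α β hα hβ h F.mv.one).1

theorem scalar_oplus {α β : ℝ} (hα : α ∈ Set.Icc (0:ℝ) 1) (hβ : β ∈ Set.Icc (0:ℝ) 1) :
    F.mv.oplus (F.scalar α) (F.scalar β) = F.scalar (min 1 (α + β)) := by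
  rcases le_total (α + β) 1 with h | h
  · rw [min_eq_right h, F.scalar_add hα hβ h]
  · have hβ' : 1 - β ∈ Set.Icc (0:ℝ) 1 := ⟨by linarith [hβ.2], by linarith [hβ.1]⟩
    have hone : F.mv.oplus (F.scalar (1 - β)) (F.scalar β) = F.mv.one := by
      rw [← F.scalar_add hβ' hβ (by linarith), sub_add_cancel, F.scalar_one]
    rw [min_eq_left h, F.scalar_one]
    refine F.mv.eq_one_of_one_le ?_
    rw [← hone]
    exact F.mv.oplus_le_oplus_left (F.scalar_mono hβ' hα (by linarith)) _

theorem scalar_star {α : ℝ} (hα : α ∈ Set.Icc (0:ℝ) 1) :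
    F.mv.star (F.scalar α) = F.scalar (1 - α) := by
  have hα' : 1 - α ∈ Set.Icc (0:ℝ) 1 := ⟨by linarith [hα.2], by linarith [hα.1]⟩
  refine F.mv.le_antisymm ?_ (F.add_smul (1 - α) α hα' hα (by linarith) F.mv.one).2
  rw [MVAlg.le, F.mv.star_star, ← F.scalar_add hα hα' (by linarith), add_sub_cancel,
    F.scalar_one]

theorem scalar_sub {α β : ℝ} (hα : α ∈ Set.Icc (0:ℝ) 1) (hβ : β ∈ Set.Icc (0:ℝ) 1)
    (h : β ≤ α) : F.mv.sub (F.scalar α) (F.scalar β) = F.scalar (α - β) := by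
  have hαβ : α - β ∈ Set.Icc (0:ℝ) 1 := ⟨by linarith, by linarith [hα.2, hβ.1]⟩
  have hsum : β + (α - β) ≤ 1 := by linarith [hα.2]
  conv_lhs => rw [← add_sub_cancel β α, F.scalar_add hβ hαβ hsum]
  exact F.mv.oplus_sub_cancel_left (F.add_smul (α - β) β hαβ hβ (by linarith) F.mv.one).2

theorem smul_scalar {α β : ℝ} (hα : α ∈ Set.Icc (0:ℝ) 1) (hβ : β ∈ Set.Icc (0:ℝ) 1) :
    F.smul α (F.scalar β) = F.scalar (α * β) := (F.mul_smul α β hα hβ _).symm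

theorem scalar_mul_scalar {α β : ℝ} (hα : α ∈ Set.Icc (0:ℝ) 1) (hβ : β ∈ Set.Icc (0:ℝ) 1) :
    F.mul (F.scalar α) (F.scalar β) = F.scalar (α * β) := by
  rw [scalar, ← F.smul_mul_left α hα, F.mul_comm, F.mul_one, F.smul_scalar hα hβ]

theorem nfold_scalar {ε : ℝ} (hε : ε ∈ Set.Icc (0:ℝ) 1) (k : ℕ) :
    F.mv.nfold (F.scalar ε) k = F.scalar (min 1 (k * ε)) := by
  induction k with
  | zero => rw [MVAlg.nfold, Nat.cast_zero, zero_mul, min_eq_right zero_le_one, F.scalar_zero]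
  | succ k ih =>
      have hk : min 1 ((k : ℝ) * ε) ∈ Set.Icc (0:ℝ) 1 :=
        ⟨le_min zero_le_one (mul_nonneg k.cast_nonneg hε.1), min_le_left _ _⟩
      rw [MVAlg.nfold, ih, F.scalar_oplus hε hk]
      congr 1
      rw [← min_add_add_left, ← min_assoc, min_eq_left (by linarith [hε.1] : (1:ℝ) ≤ ε + 1)]
      push_cast; ring_nf

theorem mul_mono_left {x x' : A} (h : F.mv.le x x') (y : A) :
    F.mv.le (F.mul x y) (F.mul x' y) := by
  have hl := F.mul_linear_left x (F.mv.sub x' x) y (F.mv.le_star_sub x' x)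
  rw [F.mv.oplus_sub_of_le h] at hl
  rw [hl]
  exact F.mv.le_oplus_right _ _

theorem mul_le_left (x y : A) : F.mv.le (F.mul x y) x := by
  have h := F.mul_mono_left (F.mv.le_one y) x
  rwa [F.mul_comm F.mv.one, F.mul_one, F.mul_comm] at h

theorem sub_mul_mul_le (x c b : A) :
    F.mv.le (F.mv.sub (F.mul x b) (F.mul c b)) (F.mv.sub x c) := by
  apply F.mv.sub_le_of_le_oplus
  have h := F.mul_mono_left (F.mv.le_oplus_sub x c) b
  rw [F.mul_linear_left c (F.mv.sub x c) b (F.mv.le_star_sub x c)] at h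
  exact F.mv.le_trans h (F.mv.oplus_le_oplus_right (F.mul_le_left _ b) _)

end FMVAlg

namespace FMVAlg

variable {A : Type u} {F : FMVAlg A} {M : Set A}

theorem exists_nfold_scalar_eq_one {ε : ℝ} (hε : ε ∈ Set.Icc (0:ℝ) 1) (hε0 : 0 < ε) :
    ∃ n, F.mv.nfold (F.scalar ε) n = F.mv.one := by
  obtain ⟨n, hn⟩ := exists_nat_ge ε⁻¹
  refine ⟨n, ?_⟩
  rw [F.nfold_scalar hε, min_eq_left ((inv_le_iff_one_le_mul₀ hε0).mp hn), F.scalar_one]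

theorem scalar_notMem (hI : F.mv.IsIdeal M) (hM : M ≠ Set.univ) {α : ℝ}
    (hα : α ∈ Set.Icc (0:ℝ) 1) (h : 0 < α) : F.scalar α ∉ M := by
  intro hmem
  obtain ⟨n, hn⟩ := exists_nfold_scalar_eq_one (F := F) hα h
  exact F.mv.one_notMem hI hM (hn ▸ F.mv.nfold_mem hI hmem n)

theorem exists_scalar_leMod (hM : F.mv.IsMaximalIdeal M) {x : A} (hx : x ∉ M) :
    ∃ ε ∈ Set.Icc (0:ℝ) 1, 0 < ε ∧ F.mv.LeMod M (F.scalar ε) x := by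
  obtain ⟨n, hn⟩ := F.mv.exists_star_nfold_mem_of_notMem hM hx
  have hn0 : n ≠ 0 := by
    rintro rfl
    exact F.mv.one_notMem hM.1 hM.2.1 hn
  have hinv : (n : ℝ)⁻¹ ∈ Set.Icc (0:ℝ) 1 :=
    ⟨by positivity, inv_le_one_of_one_le₀ (by exact_mod_cast Nat.one_le_iff_ne_zero.mpr hn0)⟩
  refine ⟨(n : ℝ)⁻¹, hinv, by positivity, F.mv.mem_of_le hM.1 ?_
    (F.mv.mem_of_le hM.1 (F.smul_le_self hinv _) hn)⟩
  -- `(1/n)·1 = (1/n)(n x ⊕ (n x)*) ≤ x ⊕ (1/n)(n x)*`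
  apply F.mv.sub_le_of_le_oplus
  rw [scalar, ← F.mv.oplus_star_self (F.mv.nfold x n)]
  exact F.mv.le_trans (F.smul_oplus_le hinv _ _)
    (F.mv.oplus_le_oplus_left (F.smul_inv_nfold_le x hn0) _)

theorem leMod_total (hM : F.mv.IsMaximalIdeal M) (x y : A) :
    F.mv.LeMod M x y ∨ F.mv.LeMod M y x := by
  by_contra! h
  obtain ⟨ε₁, hε₁, hε₁0, hxy⟩ := exists_scalar_leMod hM h.1
  obtain ⟨ε₂, hε₂, hε₂0, hyx⟩ := exists_scalar_leMod hM h.2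
  set ε := min ε₁ ε₂
  have hε : ε ∈ Set.Icc (0:ℝ) 1 := ⟨le_min hε₁.1 hε₂.1, (min_le_left _ _).trans hε₁.2⟩
  have hx : F.mv.LeMod M x (F.mv.sub (F.mv.sup x y) (F.scalar ε)) := by
    refine F.mv.leMod_sub_of_leMod_sub hM.1 (F.mv.le_sup_left x y) ?_
    rw [F.mv.sup_comm, F.mv.sup_sub]
    exact F.mv.leMod_of_le_of_leMod hM.1 (F.scalar_mono hε hε₂ (min_le_right _ _)) hyx
  have hy : F.mv.LeMod M y (F.mv.sub (F.mv.sup x y) (F.scalar ε)) := by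
    refine F.mv.leMod_sub_of_leMod_sub hM.1 (F.mv.le_sup_right x y) ?_
    rw [F.mv.sup_sub]
    exact F.mv.leMod_of_le_of_leMod hM.1 (F.scalar_mono hε hε₁ (min_le_left _ _)) hxy
  -- `x ∨ y ≤ (x ∨ y) ⊖ ε·1` modulo `M`; iterating gives `x ∨ y ≤ (x ∨ y) ⊖ 1 = 0`
  obtain ⟨n, hn⟩ := exists_nfold_scalar_eq_one (F := F) hε (lt_min hε₁0 hε₂0)
  have hs := F.mv.leMod_sub_nfold hM.1 (F.mv.leMod_sup hM.1 hx hy) n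
  rw [hn, F.mv.sub_one, MVAlg.LeMod, F.mv.sub_zero] at hs
  exact h.1 (F.mv.mem_of_le hM.1 (F.mv.le_trans (F.mv.sub_le_left x y) (F.mv.le_sup_left x y)) hs)

end FMVAlg

namespace unitInterval

noncomputable def mvAlg : MVAlg unitInterval where
  oplus a b := ⟨min 1 ((a : ℝ) + b), le_min zero_le_one (add_nonneg a.2.1 b.2.1), min_le_left _ _⟩
  star := symm
  zero := 0
  oplus_comm a b := Subtype.ext (by simp only [add_comm])
  oplus_assoc a b c := Subtype.ext (by
    show min 1 (min 1 ((a : ℝ) + b) + c) = min 1 (a + min 1 ((b : ℝ) + c))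
    rw [← min_add_add_right, ← min_add_add_left, ← min_assoc, ← min_assoc,
      min_eq_left (by linarith [nonneg c] : (1:ℝ) ≤ 1 + c),
      min_eq_left (by linarith [nonneg a] : (1:ℝ) ≤ a + 1), add_assoc])
  oplus_zero a := Subtype.ext (by simp [le_one a])
  star_star := symm_symm
  oplus_one a := Subtype.ext (by simp [nonneg a])
  luk a b := Subtype.ext (by
    show min 1 (1 - min 1 (1 - (a : ℝ) + b) + b) = min 1 (1 - min 1 (1 - (b : ℝ) + a) + a)
    simp only [min_def]
    split_ifs <;> linarith [le_one a, le_one b])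

theorem coe_oplus (a b : unitInterval) : (mvAlg.oplus a b : ℝ) = min 1 ((a : ℝ) + b) := rfl

theorem coe_star (a : unitInterval) : (mvAlg.star a : ℝ) = 1 - a := rfl

theorem mvAlg_le_iff {a b : unitInterval} : mvAlg.le a b ↔ (a : ℝ) ≤ b := by
  rw [MVAlg.le, MVAlg.one, ← Subtype.coe_inj]
  show min 1 (1 - (a : ℝ) + b) = 1 - 0 ↔ _
  rw [sub_zero, min_eq_left_iff]
  constructor <;> intro h <;> linarith

theorem coe_nfold (a : unitInterval) (n : ℕ) :
    (mvAlg.nfold a n : ℝ) = min 1 (n * (a : ℝ)) := by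
  induction n with
  | zero => rw [MVAlg.nfold, Nat.cast_zero, zero_mul, min_eq_right zero_le_one]; rfl
  | succ n ih =>
      rw [MVAlg.nfold, coe_oplus, ih, ← min_add_add_left, ← min_assoc,
        min_eq_left (by linarith [nonneg a] : (1:ℝ) ≤ a + 1)]
      push_cast; ring_nf


theorem add_le_one_of_le_star {a b : unitInterval} (h : mvAlg.le a (mvAlg.star b)) :
    (a : ℝ) + b ≤ 1 := by
  rw [mvAlg_le_iff, coe_star] at h; linarith

theorem coe_projIcc_mul {α : ℝ} (hα : α ∈ Set.Icc (0:ℝ) 1) (a : unitInterval) :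
    (Set.projIcc (0:ℝ) 1 zero_le_one (α * a) : ℝ) = α * a := by
  rw [Set.projIcc_of_mem _ ⟨mul_nonneg hα.1 (nonneg a), mul_le_one₀ hα.2 (nonneg a) (le_one a)⟩]

noncomputable def fmvAlg : FMVAlg unitInterval where
  toMVAlg := mvAlg
  mul := (· * ·)
  mul_assoc := mul_assoc
  mul_comm := mul_comm
  mul_one x := by
    show x * symm 0 = x
    rw [symm_zero, mul_one]
  mul_linear_right x y z h := Subtype.ext (by
    have h := add_le_one_of_le_star h
    rw [Set.Icc.coe_mul, coe_oplus, coe_oplus, Set.Icc.coe_mul, Set.Icc.coe_mul,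
      min_eq_right h, ← mul_add,
      min_eq_right (mul_le_one₀ (le_one x) (by linarith [nonneg y, nonneg z]) h)])
  mul_linear_left x y z h := Subtype.ext (by
    have h := add_le_one_of_le_star h
    rw [Set.Icc.coe_mul, coe_oplus, coe_oplus, Set.Icc.coe_mul, Set.Icc.coe_mul,
      min_eq_right h, ← add_mul, min_eq_right (mul_le_one₀ h (nonneg z) (le_one z))])
  smul α a := Set.projIcc 0 1 zero_le_one (α * a)
  smul_oplus α hα x y h := Subtype.ext (by
    have h := add_le_one_of_le_star h
    have hxy : mvAlg.oplus x y = ⟨(x : ℝ) + y, by linarith [nonneg x, nonneg y], h⟩ :=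
      Subtype.ext (min_eq_right h)
    rw [hxy, coe_oplus, coe_projIcc_mul hα, coe_projIcc_mul hα, coe_projIcc_mul hα,
      min_eq_right (by nlinarith [hα.1, hα.2, nonneg x, nonneg y])]
    ring)
  add_smul α β hα hβ hαβ x := by
    have hab : α + β ∈ Set.Icc (0:ℝ) 1 := ⟨by linarith [hα.1, hβ.1], hαβ⟩
    refine ⟨Subtype.ext ?_, mvAlg_le_iff.mpr ?_⟩
    · rw [coe_oplus, coe_projIcc_mul hα, coe_projIcc_mul hβ, coe_projIcc_mul hab,
        min_eq_right (by nlinarith [nonneg x, le_one x]), add_mul]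
    · rw [coe_star, coe_projIcc_mul hα, coe_projIcc_mul hβ]
      nlinarith [nonneg x, le_one x]
  mul_smul α β hα hβ x := Subtype.ext (by
    have hβx : β * (x : ℝ) ∈ Set.Icc (0:ℝ) 1 :=
      ⟨mul_nonneg hβ.1 (nonneg x), mul_le_one₀ hβ.2 (nonneg x) (le_one x)⟩
    rw [coe_projIcc_mul ⟨mul_nonneg hα.1 hβ.1, mul_le_one₀ hα.2 hβ.1 hβ.2⟩,
      Set.projIcc_of_mem _ hβx, coe_projIcc_mul hα, mul_assoc])
  one_smul x := by
    show Set.projIcc 0 1 zero_le_one (1 * (x : ℝ)) = x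
    rw [one_mul, Set.projIcc_val]
  smul_mul_left α hα x y := Subtype.ext (by
    show (Set.projIcc (0:ℝ) 1 zero_le_one (α * (x * y : unitInterval)) : ℝ)
      = (Set.projIcc (0:ℝ) 1 zero_le_one (α * x) : ℝ) * y
    rw [coe_projIcc_mul hα, coe_projIcc_mul hα, Set.Icc.coe_mul, mul_assoc])
  smul_mul_right α hα x y := Subtype.ext (by
    show (Set.projIcc (0:ℝ) 1 zero_le_one (α * (x * y : unitInterval)) : ℝ)
      = x * (Set.projIcc (0:ℝ) 1 zero_le_one (α * y) : ℝ)
    rw [coe_projIcc_mul hα, coe_projIcc_mul hα, Set.Icc.coe_mul, mul_left_comm])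

theorem fmvAlg_scalar {α : ℝ} (hα : α ∈ Set.Icc (0:ℝ) 1) : fmvAlg.scalar α = ⟨α, hα⟩ :=
  Subtype.ext (by
    show (Set.projIcc (0:ℝ) 1 zero_le_one (α * symm 0) : ℝ) = α
    rw [symm_zero, Set.Icc.coe_one, mul_one, Set.projIcc_of_mem _ hα])

theorem isMaximalIdeal_ker {A : Type u} {M : MVAlg A} {p : A → unitInterval}
    (hp : MVHom M mvAlg p) : M.IsMaximalIdeal {x | p x = 0} := by
  have hideal : M.IsIdeal {x | p x = 0} := by
    refine ⟨hp.2.2, fun x hx y hy => ?_, fun x y hxy hy => ?_⟩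
    · show p (M.oplus x y) = 0
      rw [hp.1, hx, hy]; exact mvAlg.oplus_zero 0
    · have h := mvAlg_le_iff.mp (hp.map_le hxy)
      rw [show p y = 0 from hy, Set.Icc.coe_zero] at h
      exact Subtype.ext (le_antisymm h (nonneg _))
  have hone : M.one ∉ {x | p x = 0} := by
    intro h
    have h1 : (0 : unitInterval) = mvAlg.one := (show p M.one = 0 from h) ▸ hp.map_one
    exact zero_ne_one (h1.trans symm_zero)
  refine ⟨hideal, fun h => hone (h ▸ Set.mem_univ _), fun J hJ hJne hkerJ => ?_⟩
  refine Set.Subset.antisymm (fun g hg => ?_) hkerJ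
  by_contra hg0
  -- a multiple `n g` has value `1`, so `(n g)*` lies in the kernel and `1 = n g ⊕ (n g)* ∈ J`
  have hpos : (0 : ℝ) < p g := lt_of_le_of_ne (nonneg _) (fun h => hg0 (Subtype.ext h.symm))
  obtain ⟨n, hn⟩ := exists_nat_ge (p g : ℝ)⁻¹
  have hng : p (M.nfold g n) = 1 := Subtype.ext (by
    rw [hp.map_nfold, coe_nfold, min_eq_left ((inv_le_iff_one_le_mul₀ hpos).mp hn),
      Set.Icc.coe_one])
  have hstar : M.star (M.nfold g n) ∈ J := hkerJ (by
    show p (M.star _) = 0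
    rw [hp.2.1, hng, ← symm_zero]; exact symm_symm 0)
  exact hJne (Set.eq_univ_of_forall fun x => M.mem_of_le hJ (M.le_one x)
    (M.oplus_star_self (M.nfold g n) ▸ M.oplus_mem hJ (M.nfold_mem hJ hg n) hstar))

variable (S : Type v)

noncomputable def cube : FMVAlg (S → unitInterval) where
  oplus f g s := mvAlg.oplus (f s) (g s)
  star f s := mvAlg.star (f s)
  zero _ := mvAlg.zero
  oplus_comm _ _ := funext fun _ => mvAlg.oplus_comm _ _
  oplus_assoc _ _ _ := funext fun _ => mvAlg.oplus_assoc _ _ _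
  oplus_zero _ := funext fun _ => mvAlg.oplus_zero _
  star_star _ := funext fun _ => mvAlg.star_star _
  oplus_one _ := funext fun _ => mvAlg.oplus_one _
  luk _ _ := funext fun _ => mvAlg.luk _ _
  mul f g s := fmvAlg.mul (f s) (g s)
  mul_assoc _ _ _ := funext fun _ => fmvAlg.mul_assoc _ _ _
  mul_comm _ _ := funext fun _ => fmvAlg.mul_comm _ _
  mul_one _ := funext fun _ => fmvAlg.mul_one _
  mul_linear_right f g h hle := funext fun s =>
    fmvAlg.mul_linear_right (f s) (g s) (h s) (congrFun hle s)
  mul_linear_left f g h hle := funext fun s =>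
    fmvAlg.mul_linear_left (f s) (g s) (h s) (congrFun hle s)
  smul α f s := fmvAlg.smul α (f s)
  smul_oplus α hα f g hle := funext fun s => fmvAlg.smul_oplus α hα (f s) (g s) (congrFun hle s)
  add_smul α β hα hβ hs f :=
    ⟨funext fun s => (fmvAlg.add_smul α β hα hβ hs (f s)).1,
     funext fun s => (fmvAlg.add_smul α β hα hβ hs (f s)).2⟩
  mul_smul α β hα hβ f := funext fun s => fmvAlg.mul_smul α β hα hβ (f s)
  one_smul f := funext fun s => fmvAlg.one_smul (f s)
  smul_mul_left α hα f g := funext fun s => fmvAlg.smul_mul_left α hα (f s) (g s)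
  smul_mul_right α hα f g := funext fun s => fmvAlg.smul_mul_right α hα (f s) (g s)

variable {S}

theorem cube_semisimple : (cube S).Semisimple := by
  refine Set.Subset.antisymm (fun x hx => funext fun s => ?_) ?_
  · exact hx _ (isMaximalIdeal_ker (p := fun f : S → unitInterval => f s)
      ⟨fun _ _ => rfl, fun _ => rfl, rfl⟩)
  · rintro x rfl J hJ
    exact hJ.1.1

theorem fmvHom_cube {A : Type u} {F : FMVAlg A} {φ : S → A → unitInterval}
    (hφ : ∀ s, FMVHom F fmvAlg (φ s)) : FMVHom F (cube S) (fun a s => φ s a) :=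
  ⟨⟨fun x y => funext fun s => (hφ s).1.1 x y, fun x => funext fun s => (hφ s).1.2.1 x,
    funext fun s => (hφ s).1.2.2⟩, fun x y => funext fun s => (hφ s).2.1 x y,
    fun α hα x => funext fun s => (hφ s).2.2 α hα x⟩

end unitInterval

namespace FMVAlg

variable {A : Type u} (F : FMVAlg A) (M : Set A)

/-- The real number that `x` represents modulo the maximal ideal `M`. -/
noncomputable def value (x : A) : ℝ :=
  sSup {α | α ∈ Set.Icc (0:ℝ) 1 ∧ F.mv.LeMod M (F.scalar α) x}

def Bracket (x : A) (α β : ℝ) : Prop :=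
  α ∈ Set.Icc (0:ℝ) 1 ∧ β ∈ Set.Icc (0:ℝ) 1 ∧
    F.mv.LeMod M (F.scalar α) x ∧ F.mv.LeMod M x (F.scalar β)

variable {F M}

theorem leMod_scalar_zero (hI : F.mv.IsIdeal M) (x : A) : F.mv.LeMod M (F.scalar 0) x := by
  rw [F.scalar_zero]; exact F.mv.leMod_of_le hI (F.mv.zero_le x)

theorem le_value {x : A} {α : ℝ} (hα : α ∈ Set.Icc (0:ℝ) 1) (h : F.mv.LeMod M (F.scalar α) x) :
    α ≤ F.value M x :=
  le_csSup ⟨1, fun _ hγ => hγ.1.2⟩ ⟨hα, h⟩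

theorem value_le (hM : F.mv.IsMaximalIdeal M) {x : A} {β : ℝ} (hβ : β ∈ Set.Icc (0:ℝ) 1)
    (h : F.mv.LeMod M x (F.scalar β)) : F.value M x ≤ β := by
  refine csSup_le ⟨0, ⟨le_refl _, zero_le_one⟩, leMod_scalar_zero hM.1 x⟩ fun γ ⟨hγ, hγx⟩ => ?_
  by_contra! hβγ
  have h' := F.mv.leMod_trans hM.1 hγx h
  rw [MVAlg.LeMod, F.scalar_sub hγ hβ hβγ.le] at h'
  exact scalar_notMem hM.1 hM.2.1 ⟨by linarith, by linarith [hγ.2, hβ.1]⟩ (by linarith) h'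

theorem Bracket.value_mem (hM : F.mv.IsMaximalIdeal M) {x : A} {α β : ℝ}
    (h : F.Bracket M x α β) : α ≤ F.value M x ∧ F.value M x ≤ β :=
  ⟨le_value h.1 h.2.2.1, value_le hM h.2.1 h.2.2.2⟩

theorem exists_bracket (hM : F.mv.IsMaximalIdeal M) (x : A) {ε : ℝ} (hε : 0 < ε) :
    ∃ α β, F.Bracket M x α β ∧ β - α < ε := by
  set t := F.value M x
  have hne : {α | α ∈ Set.Icc (0:ℝ) 1 ∧ F.mv.LeMod M (F.scalar α) x}.Nonempty :=
    ⟨0, ⟨le_refl _, zero_le_one⟩, leMod_scalar_zero hM.1 x⟩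
  obtain ⟨α, ⟨hα, hαx⟩, htα⟩ := exists_lt_of_lt_csSup hne (by linarith : t - ε / 2 < t)
  have ht0 : 0 ≤ t := (le_value hα hαx).trans' hα.1
  have hβ : min 1 (t + ε / 2) ∈ Set.Icc (0:ℝ) 1 :=
    ⟨le_min zero_le_one (by linarith), min_le_left _ _⟩
  refine ⟨α, min 1 (t + ε / 2), ⟨hα, hβ, hαx, ?_⟩, by linarith [min_le_right 1 (t + ε / 2)]⟩
  rcases le_total 1 (t + ε / 2) with h | h
  · rw [min_eq_left h, F.scalar_one]; exact F.mv.leMod_of_le hM.1 (F.mv.le_one x)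
  -- the quotient is linearly ordered, so `x` lies below every scalar above its value
  refine (F.leMod_total hM (F.scalar _) x).resolve_left fun hle => ?_
  have := le_value hβ hle
  rw [min_eq_right h] at this
  linarith

theorem value_eq_of_forall_bracket (hM : F.mv.IsMaximalIdeal M) {x : A} {t : ℝ}
    (h : ∀ ε > 0, ∃ α β, F.Bracket M x α β ∧ α ≤ t ∧ t ≤ β ∧ β - α < ε) : F.value M x = t := by
  refine le_antisymm (le_of_forall_pos_lt_add fun ε hε => ?_)
    (le_of_forall_pos_lt_add fun ε hε => ?_) <;>
  · obtain ⟨α, β, hb, hαt, htβ, hw⟩ := h ε hε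
    have := hb.value_mem hM
    linarith

theorem Bracket.oplus (hM : F.mv.IsMaximalIdeal M) {x y : A} {α β α' β' : ℝ}
    (h : F.Bracket M x α β) (h' : F.Bracket M y α' β') :
    F.Bracket M (F.mv.oplus x y) (min 1 (α + α')) (min 1 (β + β')) := by
  obtain ⟨hα, hβ, hαx, hxβ⟩ := h
  obtain ⟨hα', hβ', hαy, hyβ⟩ := h'
  refine ⟨⟨le_min zero_le_one (by linarith [hα.1, hα'.1]), min_le_left _ _⟩,
    ⟨le_min zero_le_one (by linarith [hβ.1, hβ'.1]), min_le_left _ _⟩, ?_, ?_⟩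
  · rw [← F.scalar_oplus hα hα']; exact F.mv.leMod_oplus hM.1 hαx hαy
  · rw [← F.scalar_oplus hβ hβ']; exact F.mv.leMod_oplus hM.1 hxβ hyβ

theorem Bracket.star {x : A} {α β : ℝ} (h : F.Bracket M x α β) :
    F.Bracket M (F.mv.star x) (1 - β) (1 - α) := by
  obtain ⟨hα, hβ, hαx, hxβ⟩ := h
  refine ⟨⟨by linarith [hβ.2], by linarith [hβ.1]⟩, ⟨by linarith [hα.2], by linarith [hα.1]⟩,
    ?_, ?_⟩
  · rw [← F.scalar_star hβ, MVAlg.LeMod, F.mv.sub_star_comm, F.mv.star_star]; exact hxβ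
  · rw [← F.scalar_star hα, MVAlg.LeMod, F.mv.sub_star_comm, F.mv.star_star]; exact hαx

theorem leMod_mul (hM : F.mv.IsMaximalIdeal M) {a b c d : A} (h1 : F.mv.LeMod M a c)
    (h2 : F.mv.LeMod M b d) : F.mv.LeMod M (F.mul a b) (F.mul c d) := by
  refine F.mv.leMod_trans hM.1 (F.mv.mem_of_le hM.1 (F.sub_mul_mul_le a c b) h1) ?_
  have h := F.mv.mem_of_le hM.1 (F.sub_mul_mul_le b d c) h2
  rwa [F.mul_comm b c, F.mul_comm d c] at h

theorem Bracket.mul (hM : F.mv.IsMaximalIdeal M) {x y : A} {α β α' β' : ℝ}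
    (h : F.Bracket M x α β) (h' : F.Bracket M y α' β') :
    F.Bracket M (F.mul x y) (α * α') (β * β') := by
  obtain ⟨hα, hβ, hαx, hxβ⟩ := h
  obtain ⟨hα', hβ', hαy, hyβ⟩ := h'
  refine ⟨⟨mul_nonneg hα.1 hα'.1, mul_le_one₀ hα.2 hα'.1 hα'.2⟩,
    ⟨mul_nonneg hβ.1 hβ'.1, mul_le_one₀ hβ.2 hβ'.1 hβ'.2⟩, ?_, ?_⟩
  · rw [← F.scalar_mul_scalar hα hα']; exact leMod_mul hM hαx hαy
  · rw [← F.scalar_mul_scalar hβ hβ']; exact leMod_mul hM hxβ hyβ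

theorem Bracket.smul (hM : F.mv.IsMaximalIdeal M) {x : A} {α β c : ℝ}
    (hc : c ∈ Set.Icc (0:ℝ) 1) (h : F.Bracket M x α β) :
    F.Bracket M (F.smul c x) (c * α) (c * β) := by
  obtain ⟨hα, hβ, hαx, hxβ⟩ := h
  refine ⟨⟨mul_nonneg hc.1 hα.1, mul_le_one₀ hc.2 hα.1 hα.2⟩,
    ⟨mul_nonneg hc.1 hβ.1, mul_le_one₀ hc.2 hβ.1 hβ.2⟩, ?_, ?_⟩
  · rw [← F.smul_scalar hc hα]
    exact F.mv.mem_of_le hM.1 (F.sub_smul_smul_le hc _ _) hαx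
  · rw [← F.smul_scalar hc hβ]
    exact F.mv.mem_of_le hM.1 (F.sub_smul_smul_le hc _ _) hxβ

theorem value_oplus (hM : F.mv.IsMaximalIdeal M) (x y : A) :
    F.value M (F.mv.oplus x y) = min 1 (F.value M x + F.value M y) := by
  refine value_eq_of_forall_bracket hM fun ε hε => ?_
  obtain ⟨α, β, hb, hw⟩ := exists_bracket hM x (half_pos hε)
  obtain ⟨α', β', hb', hw'⟩ := exists_bracket hM y (half_pos hε)
  obtain ⟨hαx, hxβ⟩ := hb.value_mem hM
  obtain ⟨hαy, hyβ⟩ := hb'.value_mem hM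
  refine ⟨_, _, hb.oplus hM hb', min_le_min_left 1 (add_le_add hαx hαy),
    min_le_min_left 1 (add_le_add hxβ hyβ), ?_⟩
  have : min 1 (β + β') - min 1 (α + α') ≤ β + β' - (α + α') := by
    simp only [min_def]; split_ifs <;> linarith
  linarith

theorem value_star (hM : F.mv.IsMaximalIdeal M) (x : A) :
    F.value M (F.mv.star x) = 1 - F.value M x := by
  refine value_eq_of_forall_bracket hM fun ε hε => ?_
  obtain ⟨α, β, hb, hw⟩ := exists_bracket hM x hε
  obtain ⟨hαx, hxβ⟩ := hb.value_mem hM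
  exact ⟨_, _, hb.star, by linarith, by linarith, by linarith⟩

theorem value_mul (hM : F.mv.IsMaximalIdeal M) (x y : A) :
    F.value M (F.mul x y) = F.value M x * F.value M y := by
  refine value_eq_of_forall_bracket hM fun ε hε => ?_
  obtain ⟨α, β, hb, hw⟩ := exists_bracket hM x (half_pos hε)
  obtain ⟨α', β', hb', hw'⟩ := exists_bracket hM y (half_pos hε)
  obtain ⟨hαx, hxβ⟩ := hb.value_mem hM
  obtain ⟨hαy, hyβ⟩ := hb'.value_mem hM
  have hα := hb.1; have hβ := hb.2.1; have hα' := hb'.1; have hβ' := hb'.2.1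
  refine ⟨_, _, hb.mul hM hb', mul_le_mul hαx hαy hα'.1 (hα.1.trans hαx),
    mul_le_mul hxβ hyβ (hα'.1.trans hαy) hβ.1, ?_⟩
  have h1 : β * (β' - α') ≤ β' - α' := mul_le_of_le_one_left (by linarith) hβ.2
  have h2 : α' * (β - α) ≤ β - α := mul_le_of_le_one_left (by linarith) hα'.2
  linarith [show β * β' - α * α' = β * (β' - α') + α' * (β - α) by ring]

theorem value_smul (hM : F.mv.IsMaximalIdeal M) {c : ℝ} (hc : c ∈ Set.Icc (0:ℝ) 1) (x : A) :
    F.value M (F.smul c x) = c * F.value M x := by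
  refine value_eq_of_forall_bracket hM fun ε hε => ?_
  obtain ⟨α, β, hb, hw⟩ := exists_bracket hM x hε
  obtain ⟨hαx, hxβ⟩ := hb.value_mem hM
  refine ⟨_, _, hb.smul hM hc, mul_le_mul_of_nonneg_left hαx hc.1,
    mul_le_mul_of_nonneg_left hxβ hc.1, ?_⟩
  nlinarith [hc.1, hc.2]

theorem value_eq_zero_iff (hM : F.mv.IsMaximalIdeal M) (x : A) : F.value M x = 0 ↔ x ∈ M := by
  constructor
  · intro h
    by_contra hx
    obtain ⟨ε, hε, hε0, hεx⟩ := F.exists_scalar_leMod hM hx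
    linarith [le_value hε hεx]
  · intro hx
    have hb : F.Bracket M x 0 0 := ⟨⟨le_refl _, zero_le_one⟩, ⟨le_refl _, zero_le_one⟩,
      leMod_scalar_zero hM.1 x, by rw [MVAlg.LeMod, F.scalar_zero, F.mv.sub_zero]; exact hx⟩
    exact le_antisymm (hb.value_mem hM).2 (hb.value_mem hM).1

end FMVAlg

open unitInterval in
/-- Hölder's theorem for fMV-algebras. -/
theorem FMVAlg.exists_fmvHom_ker_eq {A : Type u} {F : FMVAlg A} {M : Set A}
    (hM : F.mv.IsMaximalIdeal M) : ∃ p, FMVHom F fmvAlg p ∧ ∀ x, p x = 0 ↔ x ∈ M := by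
  have hmem : ∀ x, F.value M x ∈ Set.Icc (0:ℝ) 1 := fun x => by
    obtain ⟨α, β, hb, -⟩ := F.exists_bracket hM x one_pos
    exact ⟨hb.1.1.trans (hb.value_mem hM).1, (hb.value_mem hM).2.trans hb.2.1.2⟩
  refine ⟨fun x => ⟨F.value M x, hmem x⟩, ⟨⟨fun x y => ?_, fun x => ?_, ?_⟩, fun x y => ?_,
    fun c hc x => ?_⟩, fun x => Subtype.ext_iff.trans (F.value_eq_zero_iff hM x)⟩ <;>
    apply Subtype.ext
  · exact F.value_oplus hM x y
  · exact F.value_star hM x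
  · exact (F.value_eq_zero_iff hM _).mpr hM.1.1
  · exact F.value_mul hM x y
  · show F.value M (F.smul c x) = (Set.projIcc (0:ℝ) 1 zero_le_one (c * F.value M x) : ℝ)
    rw [F.value_smul hM hc, Set.projIcc_of_mem _ ⟨mul_nonneg hc.1 (hmem x).1,
      mul_le_one₀ hc.2 (hmem x).1 (hmem x).2⟩]

section HomsToUnitInterval

open unitInterval

variable {A : Type u} {B : Type v} {F : FMVAlg A} {G : FMVAlg B}

theorem FMVHom.map_scalar {f : A → B} (hf : FMVHom F G f) {α : ℝ} (hα : α ∈ Set.Icc (0:ℝ) 1) :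
    f (F.scalar α) = G.scalar α := by
  rw [FMVAlg.scalar, hf.2.2 α hα, hf.1.map_one, FMVAlg.scalar]

theorem FMVHom.coe_le_coe_of_ker_subset {p q : A → unitInterval} (hp : FMVHom F fmvAlg p)
    (hq : FMVHom F fmvAlg q) (hker : ∀ x, p x = 0 → q x = 0) (x : A) : (p x : ℝ) ≤ q x := by
  -- `p` kills `(p x)·1 ⊖ x`, hence so does `q`
  have hpx : p (F.mv.sub (F.scalar (p x)) x) = 0 := by
    rw [hp.1.map_sub, hp.map_scalar (p x).2, fmvAlg_scalar (p x).2]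
    exact fmvAlg.mv.sub_self (p x)
  have hqx := hker _ hpx
  rw [hq.1.map_sub, hq.map_scalar (p x).2, fmvAlg_scalar (p x).2] at hqx
  exact mvAlg_le_iff.mp (fmvAlg.mv.le_of_sub_eq_zero hqx)

theorem FMVHom.eq_of_ker_subset {p q : A → unitInterval} (hp : FMVHom F fmvAlg p)
    (hq : FMVHom F fmvAlg q) (hker : ∀ x, p x = 0 → q x = 0) : p = q := by
  funext x
  have h := hp.coe_le_coe_of_ker_subset hq hker (F.mv.star x)
  rw [hp.1.2.1, hq.1.2.1] at h
  change 1 - (p x : ℝ) ≤ 1 - q x at h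
  exact Subtype.ext (le_antisymm (hp.coe_le_coe_of_ker_subset hq hker x) (by linarith))

theorem FMVAlg.exists_fmvHom_ne (hF : F.Semisimple) {x y : A} (hxy : x ≠ y) :
    ∃ p, FMVHom F fmvAlg p ∧ p x ≠ p y := by
  set d := F.mv.oplus (F.mv.sub x y) (F.mv.sub y x)
  have hd : d ≠ F.mv.zero := fun hd => hxy <| F.mv.eq_of_sub_eq_zero
    (F.mv.le_antisymm (hd ▸ F.mv.le_oplus_right _ _) (F.mv.zero_le _))
    (F.mv.le_antisymm (hd ▸ F.mv.le_oplus_left _ _) (F.mv.zero_le _))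
  obtain ⟨M, hM, hdM⟩ : ∃ M, F.mv.IsMaximalIdeal M ∧ d ∉ M := by
    by_contra! h
    exact hd (hF.subset h)
  obtain ⟨p, hp, hker⟩ := F.exists_fmvHom_ker_eq hM
  refine ⟨p, hp, fun hpxy => hdM ((hker d).mp ?_)⟩
  rw [hp.1.1, hp.1.map_sub, hp.1.map_sub, hpxy, fmvAlg.mv.sub_self]
  exact fmvAlg.mv.oplus_zero _

theorem FMVHom.exists_extension {C : Type w} {H : FMVAlg C} {j : C → B} (hj : FMVHom H G j)
    (hinj : Function.Injective j) {g : C → unitInterval} (hg : FMVHom H fmvAlg g) :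
    ∃ q, FMVHom G fmvAlg q ∧ q ∘ j = g := by
  set K : Set B := {b | ∃ z, g z = 0 ∧ G.mv.le b (j z)}
  have hI : G.mv.IsIdeal K := by
    refine ⟨⟨H.mv.zero, hg.1.2.2, hj.1.2.2 ▸ G.mv.le_refl _⟩, ?_, ?_⟩
    · rintro x ⟨z, hz, hx⟩ y ⟨z', hz', hy⟩
      refine ⟨H.mv.oplus z z', ?_, hj.1.1 z z' ▸ G.mv.oplus_le_oplus hx hy⟩
      rw [hg.1.1, hz, hz']
      exact fmvAlg.mv.oplus_zero _
    · rintro x y hxy ⟨z, hz, hy⟩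
      exact ⟨z, hz, G.mv.le_trans hxy hy⟩
  have hone : G.mv.one ∉ K := by
    rintro ⟨z, hz, hle⟩
    have hz1 : z = H.mv.one := hinj ((G.mv.eq_one_of_one_le hle).trans hj.1.map_one.symm)
    rw [hz1, hg.1.map_one] at hz
    exact zero_ne_one (hz.symm.trans symm_zero)
  obtain ⟨M, hM, hIM⟩ := G.mv.exists_isMaximalIdeal_superset hI hone
  obtain ⟨q, hq, hker⟩ := G.exists_fmvHom_ker_eq hM
  refine ⟨q, hq, (hg.eq_of_ker_subset (hj.comp hq) fun z hz => ?_).symm⟩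
  exact (hker (j z)).mpr (hIM ⟨z, hz, G.mv.le_refl _⟩)

end HomsToUnitInterval

theorem stmt12_general {ZC AC BC : Type u}
    (Z : FMVAlg ZC) (A : FMVAlg AC) (B : FMVAlg BC)
    (hA : A.Semisimple) (hB : B.Semisimple)
    (zA : ZC → AC) (zB : ZC → BC)
    (hzA : FMVHom Z A zA) (hzB : FMVHom Z B zB)
    (hiA : Function.Injective zA) (hiB : Function.Injective zB) :
    ∃ (EC : Type u) (E : FMVAlg EC) (fA : AC → EC) (fB : BC → EC),
      E.Semisimple ∧ FMVHom A E fA ∧ FMVHom B E fB ∧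
      Function.Injective fA ∧ Function.Injective fB ∧ fA ∘ zA = fB ∘ zB := by
  let S : Type u := {pq : (AC → unitInterval) × (BC → unitInterval) //
    FMVHom A unitInterval.fmvAlg pq.1 ∧ FMVHom B unitInterval.fmvAlg pq.2 ∧
      pq.1 ∘ zA = pq.2 ∘ zB}
  refine ⟨S → unitInterval, unitInterval.cube S, fun a s => s.1.1 a, fun b s => s.1.2 b,
    unitInterval.cube_semisimple, unitInterval.fmvHom_cube fun s => s.2.1,
    unitInterval.fmvHom_cube fun s => s.2.2.1, fun a a' h => ?_,
    fun b b' h => ?_, funext fun z => funext fun s => congrFun s.2.2.2 z⟩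
  · by_contra hne
    obtain ⟨p, hp, hpne⟩ := A.exists_fmvHom_ne hA hne
    obtain ⟨q, hq, hqp⟩ := hzB.exists_extension hiB (hzA.comp hp)
    exact hpne (congrFun h ⟨(p, q), hp, hq, hqp.symm⟩)
  · by_contra hne
    obtain ⟨q, hq, hqne⟩ := B.exists_fmvHom_ne hB hne
    obtain ⟨p, hp, hpq⟩ := hzA.exists_extension hiA (hzB.comp hq)
    exact hqne (congrFun h ⟨(p, q), hp, hq, hpq⟩)

/-- unital commutative semisimple fMV-algebras have the amalgamation property. -/
theorem stmt12 {ZC AC BC : Type u}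
    (Z : FMVAlg ZC) (A : FMVAlg AC) (B : FMVAlg BC)
    (hZ : Z.Semisimple) (hA : A.Semisimple) (hB : B.Semisimple)
    (zA : ZC → AC) (zB : ZC → BC)
    (hzA : FMVHom Z A zA) (hzB : FMVHom Z B zB)
    (hiA : Function.Injective zA) (hiB : Function.Injective zB) :
    ∃ (EC : Type u) (E : FMVAlg EC) (fA : AC → EC) (fB : BC → EC),
      E.Semisimple ∧ FMVHom A E fA ∧ FMVHom B E fB ∧
      Function.Injective fA ∧ Function.Injective fB ∧ fA ∘ zA = fB ∘ zB :=
  stmt12_general Z A B hA hB zA zB hzA hzB hiA hiB
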